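/- If 𝒞 is an optimal set-join cover of a graph G, then the family of component sets V(𝒞) has a system of distinct representatives: there exists an injective choice of elements x_K ∈ K, one for each component K ∈ V(𝒞). -/

import Mathlib

open Matrix

/-- A finite simple undirected graph that allows loops: a symmetric adjacency
relation on the vertex type. -/
structure LGraph (V : Type*) where
  /-- the adjacency relation; `Adj v v` means a loop at `v`. -/
  Adj : V → V → Prop
  /-- adjacency is symmetric -/
  symm : ∀ {u v : V}, Adj u v → Adj v u

namespace LGraph

variable {V W : Type*}

/-- `𝒞` is a set-join cover of `G`: all components are nonempty subsets of the
vertex set, and the union of the edge sets of the set-joins `K ∨ L` in `𝒞` is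
exactly the edge set of `G`. A set-join is represented as an unordered pair
`s(K, L)` of subsets of the vertex set. -/
def IsSetJoinCover (G : LGraph V) (𝒞 : Set (Sym2 (Set V))) : Prop :=
  (∀ p ∈ 𝒞, ∀ K ∈ p, (K : Set V).Nonempty) ∧
    ∀ u v : V, G.Adj u v ↔ ∃ p ∈ 𝒞, ∃ K L : Set V, p = s(K, L) ∧ u ∈ K ∧ v ∈ L

/-- The component set `V(𝒞)` of a set-join cover: all subsets of the vertex set
appearing as a component of some set-join in `𝒞`. -/
def comps (𝒞 : Set (Sym2 (Set V))) : Set (Set V) :=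
  {K : Set V | ∃ p ∈ 𝒞, K ∈ p}

/-- The order `|𝒞|` of a set-join cover: the number of its components. -/
noncomputable def coverOrder (𝒞 : Set (Sym2 (Set V))) : ℕ :=
  (comps 𝒞).ncard

/-- The SNT-rank `st₊(G)` of a graph: the minimal order of a set-join cover of `G`. -/
noncomputable def st (G : LGraph V) : ℕ :=
  sInf {k : ℕ | ∃ 𝒞 : Set (Sym2 (Set V)), G.IsSetJoinCover 𝒞 ∧ coverOrder 𝒞 = k}

/-- An optimal set-join cover (OSJ cover): a set-join cover of order `st₊(G)`. -/
def IsOptimalCover (G : LGraph V) (𝒞 : Set (Sym2 (Set V))) : Prop :=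
  G.IsSetJoinCover 𝒞 ∧ coverOrder 𝒞 = G.st

/-- The graph `G(𝒞)` of a set-join cover: vertices are the components, and two
components `K`, `L` are adjacent iff the set-join `K ∨ L` belongs to `𝒞`. -/
def coverGraph (𝒞 : Set (Sym2 (Set V))) : LGraph (comps 𝒞) where
  Adj K L := s((K : Set V), (L : Set V)) ∈ 𝒞
  symm := by
    intro K L h
    rwa [Sym2.eq_swap] at h

/-- The neighbourhood of a vertex (`v ∈ neighborSet v` iff `v` has a loop). -/
def neighborSet (G : LGraph V) (v : V) : Set V := {w | G.Adj v w}

/-- The induced subgraph on a set of vertices. -/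
def induce (G : LGraph V) (S : Set V) : LGraph S where
  Adj a b := G.Adj (a : V) (b : V)
  symm := by intro a b h; exact G.symm h

/-- Adjacency for the disjoint union of two graphs. -/
def disjUnionAdj (G : LGraph V) (H : LGraph W) : V ⊕ W → V ⊕ W → Prop
  | Sum.inl a, Sum.inl b => G.Adj a b
  | Sum.inr a, Sum.inr b => H.Adj a b
  | _, _ => False

/-- The disjoint union `G ∪ H` of two graphs. -/
def disjUnion (G : LGraph V) (H : LGraph W) : LGraph (V ⊕ W) where
  Adj := disjUnionAdj G H
  symm := by
    rintro (a | a) (b | b) h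
    · exact G.symm h
    · exact h.elim
    · exact h.elim
    · exact H.symm h

/-- The graph with no edges on vertex type `V`. -/
def emptyGraph (V : Type*) : LGraph V where
  Adj _ _ := False
  symm := by intro u v h; exact h

/-- Adjacency for the join of a graph with a single looped vertex `none`. -/
def joinK1ℓAdj (G : LGraph V) : Option V → Option V → Prop
  | some a, some b => G.Adj a b
  | _, _ => True

/-- The join `G ∨ K₁ˡ` of `G` with a single looped vertex (the vertex `none`). -/
def joinK1ℓ (G : LGraph V) : LGraph (Option V) where
  Adj := joinK1ℓAdj G
  symm := by
    rintro (_ | a) (_ | b) h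
    · trivial
    · trivial
    · trivial
    · exact G.symm h

/-- The complete loopless graph `Kₙ` on `Fin n`. -/
def completeGraph (n : ℕ) : LGraph (Fin n) where
  Adj i j := i ≠ j
  symm := by intro i j h; exact h.symm

/-- The path `Pₙ` on `n` vertices (no loops). -/
def pathGraph (n : ℕ) : LGraph (Fin n) where
  Adj i j := (i : ℕ) + 1 = (j : ℕ) ∨ (j : ℕ) + 1 = (i : ℕ)
  symm := by intro i j h; exact h.symm

/-- The cycle `Cₙ` on `n` vertices (no loops), for `n ≥ 3`. -/
def cycleGraph (n : ℕ) : LGraph (Fin n) where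
  Adj i j := ((i : ℕ) + 1) % n = (j : ℕ) ∨ ((j : ℕ) + 1) % n = (i : ℕ)
  symm := by intro i j h; exact h.symm

/-- Adjacency for the generalised star: the centre is `none`, and `some ⟨i, j⟩`
is the vertex at distance `j + 1` from the centre on arm `i`. -/
def genStarAdj (t : ℕ) (k : Fin t → ℕ) :
    Option ((i : Fin t) × Fin (k i)) → Option ((i : Fin t) × Fin (k i)) → Prop
  | none, none => False
  | none, some ⟨_, j⟩ => (j : ℕ) = 0
  | some ⟨_, j⟩, none => (j : ℕ) = 0
  | some ⟨i, j⟩, some ⟨i', j'⟩ => i = i' ∧ ((j : ℕ) + 1 = (j' : ℕ) ∨ (j' : ℕ) + 1 = (j : ℕ))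

/-- The generalised star `star(k₁, …, k_t)` with central vertex `none` and `t`
arms, the `i`-th arm being a path with `k i` edges emanating from the centre. -/
def genStar (t : ℕ) (k : Fin t → ℕ) : LGraph (Option ((i : Fin t) × Fin (k i))) where
  Adj := genStarAdj t k
  symm := by
    rintro (_ | ⟨i, j⟩) (_ | ⟨i', j'⟩) h
    · exact h.elim
    · exact h
    · exact h
    · exact ⟨h.1.symm, h.2.symm⟩

/-- A loopless leaf: a vertex with exactly one neighbour and no loop. -/
def LooplessLeaf (G : LGraph V) (v : V) : Prop :=
  ¬ G.Adj v v ∧ ∃ w : V, G.neighborSet v = {w}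

/-- Delete from `G` all edges incident to the vertex `w`. -/
def deleteVertexEdges (G : LGraph V) (w : V) : LGraph V where
  Adj u v := G.Adj u v ∧ u ≠ w ∧ v ≠ w
  symm := by intro u v h; exact ⟨G.symm h.1, h.2.2, h.2.1⟩

/-- A graph is twin-free if no two distinct vertices have the same neighbourhood. -/
def TwinFree (G : LGraph V) : Prop :=
  ∀ u v : V, G.neighborSet u = G.neighborSet v → u = v

/-- `G` has a unique optimal set-join cover. -/
def HasUniqueOptimalCover (G : LGraph V) : Prop :=
  ∃! 𝒞 : Set (Sym2 (Set V)), G.IsSetJoinCover 𝒞 ∧ coverOrder 𝒞 = G.st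

/-- The cover graphs of two set-join covers are isomorphic. -/
def CoverGraphIso (𝒞 : Set (Sym2 (Set V))) (𝒟 : Set (Sym2 (Set W))) : Prop :=
  ∃ e : comps 𝒞 ≃ comps 𝒟,
    ∀ K L : comps 𝒞, (coverGraph 𝒞).Adj K L ↔ (coverGraph 𝒟).Adj (e K) (e L)

/-- All optimal set-join covers of `G` have isomorphic cover graphs. -/
def HasUniqueOSJCoverGraph (G : LGraph V) : Prop :=
  ∀ 𝒞 𝒟 : Set (Sym2 (Set V)),
    G.IsOptimalCover 𝒞 → G.IsOptimalCover 𝒟 → CoverGraphIso 𝒞 𝒟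

/-- Entrywise nonnegativity of a real matrix. -/
def EntrywiseNonneg {m n : Type*} (A : Matrix m n ℝ) : Prop :=
  ∀ i j, 0 ≤ A i j

/-- The SNT-rank `st₊(A)` of a matrix: the minimal `k` such that `A = B * C * Bᵀ`
with `B` an entrywise nonnegative `n × k` matrix and `C` a symmetric entrywise
nonnegative `k × k` matrix. -/
noncomputable def stM {V : Type*} [Fintype V] (A : Matrix V V ℝ) : ℕ :=
  sInf {k : ℕ | ∃ B : Matrix V (Fin k) ℝ, ∃ C : Matrix (Fin k) (Fin k) ℝ,
    EntrywiseNonneg B ∧ C.IsSymm ∧ EntrywiseNonneg C ∧ A = B * C * Bᵀ}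

/-- The SNT-rank `st₊(G)` of a graph defined via matrices: the minimum of
`st₊(A)` over all symmetric entrywise nonnegative matrices `A` whose pattern
graph is `G`. -/
noncomputable def stMGraph {V : Type*} [Fintype V] (G : LGraph V) : ℕ :=
  sInf {k : ℕ | ∃ A : Matrix V V ℝ, A.IsSymm ∧ EntrywiseNonneg A ∧
    (∀ i j, G.Adj i j ↔ 0 < A i j) ∧ stM A = k}

/-- The loopy graph associated with a simple graph. -/
def _root_.SimpleGraph.toLGraph (G : SimpleGraph V) : LGraph V where
  Adj := G.Adj
  symm := by intro u v h; exact G.adj_symm h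

/-- The edge star cover number `starc(G)` of a loopless simple graph: the minimal
number of stars (given by a centre and a nonempty set of leaves not containing
the centre) whose edge sets have union exactly `E(G)`. -/
noncomputable def starCoverNumber (G : SimpleGraph V) : ℕ :=
  sInf {k : ℕ | ∃ f : Fin k → V × Set V,
    (∀ i, (f i).2.Nonempty ∧ (f i).1 ∉ (f i).2) ∧
    ∀ u v : V, G.Adj u v ↔
      ∃ i, (u = (f i).1 ∧ v ∈ (f i).2) ∨ (v = (f i).1 ∧ u ∈ (f i).2)}

/-!
If some components `𝒜` of a set-join cover had fewer elements in total than there are of them,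
splitting every member of `𝒜` into the singletons of its elements would give a set-join cover of
the same graph with fewer components. So the components of an optimal cover satisfy Hall's
condition, and Hall's marriage theorem provides the system of distinct representatives.
-/

theorem _root_.Set.exists_injective_mem_of_ncard_le_ncard_sUnion {α : Type*} [Finite α]
    {𝒮 : Set (Set α)} (h : ∀ 𝒜 ⊆ 𝒮, 𝒜.ncard ≤ (⋃₀ 𝒜).ncard) :
    ∃ f : 𝒮 → α, Function.Injective f ∧ ∀ K : 𝒮, f K ∈ (K : Set α) := by
  classical
  have := Fintype.ofFinite α
  obtain ⟨f, hf, hmem⟩ := (Finset.all_card_le_biUnion_card_iff_exists_injective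
    fun K : 𝒮 => (K : Set α).toFinset).mp fun s => by
      have hs : ⋃₀ (Subtype.val '' (s : Set 𝒮)) = ↑(s.biUnion fun K => (K : Set α).toFinset) := by
        ext; simp
      have := h _ (Subtype.coe_image_subset 𝒮 s)
      rwa [hs, Set.ncard_image_of_injective _ Subtype.val_injective, Set.ncard_coe_finset,
        Set.ncard_coe_finset] at this
  exact ⟨f, hf, fun K => Set.mem_toFinset.mp (hmem K)⟩

lemma mem_comps_of_mk_mem {𝒞 : Set (Sym2 (Set V))} {K L : Set V} (h : s(K, L) ∈ 𝒞) :
    K ∈ comps 𝒞 :=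
  ⟨_, h, Sym2.mem_mk_left K L⟩

lemma IsSetJoinCover.nonempty_of_mem_comps {G : LGraph V} {𝒞 : Set (Sym2 (Set V))}
    (h : G.IsSetJoinCover 𝒞) {K : Set V} (hK : K ∈ comps 𝒞) : K.Nonempty :=
  let ⟨p, hp, hKp⟩ := hK
  h.1 p hp K hKp

lemma st_le_coverOrder {G : LGraph V} {𝒞 : Set (Sym2 (Set V))} (h : G.IsSetJoinCover 𝒞) :
    G.st ≤ coverOrder 𝒞 :=
  Nat.sInf_le ⟨𝒞, h, rfl⟩

def refineCover (𝒞 : Set (Sym2 (Set V))) (r : Set V → Set (Set V)) : Set (Sym2 (Set V)) :=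
  {q | ∃ K L, s(K, L) ∈ 𝒞 ∧ ∃ K' ∈ r K, ∃ L' ∈ r L, q = s(K', L')}

lemma comps_refineCover_subset (𝒞 : Set (Sym2 (Set V))) (r : Set V → Set (Set V)) :
    comps (refineCover 𝒞 r) ⊆ ⋃ K ∈ comps 𝒞, r K := by
  rintro M ⟨_, ⟨K, L, hKL, K', hK', L', hL', rfl⟩, hM⟩
  rw [Set.mem_iUnion₂]
  rcases Sym2.mem_iff.mp hM with rfl | rfl
  · exact ⟨K, mem_comps_of_mk_mem hKL, hK'⟩
  · exact ⟨L, mem_comps_of_mk_mem (Sym2.eq_swap ▸ hKL), hL'⟩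

lemma isSetJoinCover_refineCover {G : LGraph V} {𝒞 : Set (Sym2 (Set V))}
    (h : G.IsSetJoinCover 𝒞) {r : Set V → Set (Set V)} (hr : ∀ K ∈ comps 𝒞, ⋃₀ r K = K)
    (hne : ∀ K ∈ comps 𝒞, ∀ K' ∈ r K, K'.Nonempty) :
    G.IsSetJoinCover (refineCover 𝒞 r) := by
  have hsub {K K' : Set V} (hK : K ∈ comps 𝒞) (hK' : K' ∈ r K) : K' ⊆ K :=
    hr K hK ▸ Set.subset_sUnion_of_mem hK'
  refine ⟨?_, fun u v => (h.2 u v).trans ⟨?_, ?_⟩⟩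
  · intro q hq M hM
    obtain ⟨K, hK, hMK⟩ := Set.mem_iUnion₂.mp (comps_refineCover_subset 𝒞 r ⟨q, hq, hM⟩)
    exact hne K hK M hMK
  · rintro ⟨_, hp, K, L, rfl, huK, hvL⟩
    have hK := mem_comps_of_mk_mem hp
    have hL := mem_comps_of_mk_mem (Sym2.eq_swap ▸ hp)
    obtain ⟨K', hK', huK'⟩ := Set.mem_sUnion.mp ((hr K hK).symm ▸ huK)
    obtain ⟨L', hL', hvL'⟩ := Set.mem_sUnion.mp ((hr L hL).symm ▸ hvL)
    exact ⟨_, ⟨K, L, hp, K', hK', L', hL', rfl⟩, K', L', rfl, huK', hvL'⟩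
  · rintro ⟨_, ⟨K, L, hp, K', hK', L', hL', rfl⟩, M, N, hMN, huM, hvN⟩
    have hK := mem_comps_of_mk_mem hp
    have hL := mem_comps_of_mk_mem (Sym2.eq_swap ▸ hp)
    rcases Sym2.eq_iff.mp hMN with ⟨rfl, rfl⟩ | ⟨rfl, rfl⟩
    · exact ⟨_, hp, K, L, rfl, hsub hK hK' huM, hsub hL hL' hvN⟩
    · exact ⟨_, hp, L, K, Sym2.eq_swap, hsub hL hL' huM, hsub hK hK' hvN⟩

open Classical in
def splitIntoSingletons (𝒜 : Set (Set V)) (K : Set V) : Set (Set V) :=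
  if K ∈ 𝒜 then singleton '' K else {K}

lemma sUnion_splitIntoSingletons (𝒜 : Set (Set V)) (K : Set V) :
    ⋃₀ splitIntoSingletons 𝒜 K = K := by
  unfold splitIntoSingletons
  split_ifs
  · simp
  · exact Set.sUnion_singleton K

lemma nonempty_of_mem_splitIntoSingletons {𝒜 : Set (Set V)} {K K' : Set V} (hK : K.Nonempty)
    (hK' : K' ∈ splitIntoSingletons 𝒜 K) : K'.Nonempty := by
  unfold splitIntoSingletons at hK'
  split_ifs at hK'
  · obtain ⟨u, -, rfl⟩ := hK'
    exact Set.singleton_nonempty u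
  · exact Set.mem_singleton_iff.mp hK' ▸ hK

lemma biUnion_splitIntoSingletons_subset (𝒦 𝒜 : Set (Set V)) :
    ⋃ K ∈ 𝒦, splitIntoSingletons 𝒜 K ⊆ (𝒦 \ 𝒜) ∪ singleton '' ⋃₀ (𝒦 ∩ 𝒜) := by
  simp only [Set.iUnion₂_subset_iff]
  intro K hK M hM
  unfold splitIntoSingletons at hM
  split_ifs at hM with hKA
  · obtain ⟨u, hu, rfl⟩ := hM
    exact Or.inr ⟨u, ⟨K, ⟨hK, hKA⟩, hu⟩, rfl⟩
  · exact Or.inl (Set.mem_singleton_iff.mp hM ▸ ⟨hK, hKA⟩)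

lemma IsSetJoinCover.exists_coverOrder_lt [Finite V] {G : LGraph V} {𝒞 : Set (Sym2 (Set V))}
    (h : G.IsSetJoinCover 𝒞) {𝒜 : Set (Set V)} (h𝒜 : 𝒜 ⊆ comps 𝒞)
    (hlt : (⋃₀ 𝒜).ncard < 𝒜.ncard) :
    ∃ 𝒟, G.IsSetJoinCover 𝒟 ∧ coverOrder 𝒟 < coverOrder 𝒞 := by
  refine ⟨refineCover 𝒞 (splitIntoSingletons 𝒜),
    isSetJoinCover_refineCover h (fun K _ => sUnion_splitIntoSingletons 𝒜 K)
      fun K hK _ => nonempty_of_mem_splitIntoSingletons (h.nonempty_of_mem_comps hK), ?_⟩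
  have hsub := (comps_refineCover_subset 𝒞 _).trans
    (biUnion_splitIntoSingletons_subset (comps 𝒞) 𝒜)
  rw [Set.inter_eq_right.mpr h𝒜] at hsub
  calc coverOrder (refineCover 𝒞 (splitIntoSingletons 𝒜))
      ≤ (comps 𝒞 \ 𝒜).ncard + (singleton '' ⋃₀ 𝒜 : Set (Set V)).ncard :=
        (Set.ncard_le_ncard hsub).trans (Set.ncard_union_le _ _)
    _ = (comps 𝒞 \ 𝒜).ncard + (⋃₀ 𝒜).ncard := by
        rw [Set.ncard_image_of_injective _ Set.singleton_injective]
    _ < (comps 𝒞 \ 𝒜).ncard + 𝒜.ncard := by omega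
    _ = coverOrder 𝒞 := Set.ncard_sdiff_add_ncard_of_subset h𝒜

lemma IsOptimalCover.ncard_le_ncard_sUnion [Finite V] {G : LGraph V} {𝒞 : Set (Sym2 (Set V))}
    (h : G.IsOptimalCover 𝒞) {𝒜 : Set (Set V)} (h𝒜 : 𝒜 ⊆ comps 𝒞) :
    𝒜.ncard ≤ (⋃₀ 𝒜).ncard := by
  by_contra! hlt
  obtain ⟨𝒟, h𝒟, hlt⟩ := h.1.exists_coverOrder_lt h𝒜 hlt
  exact (st_le_coverOrder h𝒟).not_gt (h.2 ▸ hlt)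

/-- If `𝒞` is an optimal set-join cover of a graph `G`, then the family
of components `V(𝒞)` has a system of distinct representatives: an injective choice of
an element of each component. -/
theorem exists_sdr_of_optimal {V : Type*} [Fintype V] (G : LGraph V)
    (𝒞 : Set (Sym2 (Set V))) (hopt : G.IsOptimalCover 𝒞) :
    ∃ f : comps 𝒞 → V, Function.Injective f ∧ ∀ K : comps 𝒞, f K ∈ (K : Set V) :=
  Set.exists_injective_mem_of_ncard_le_ncard_sUnion fun _ h𝒜 => hopt.ncard_le_ncard_sUnion h𝒜

end LGraph
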